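/- Let a, b : ℤ → ℝ satisfy 1 + b_{i−1} a_i ≠ 0 for all i, let V : ℤ → ℝ³ satisfy V_{i+3} = a_i V_{i+2} + b_i V_{i+1} + V_i and det(V_i, V_{i+1}, V_{i+2}) = 1 for all i, and let λ : ℤ → ℝ satisfy λ_i λ_{i+1} λ_{i+2} = −1/(1 + b_{i−1} a_i) for all i. Set W_i := λ_i (V_{i−1} × V_{i+1}). Then for all i ∈ ℤ: det(W_i, W_{i+1}, W_{i+2}) = 1 and W_{i+3} = −(λ_i b_{i−1}/λ_{i+2}) W_{i+2} − (λ_{i+3} a_{i+1}/λ_{i+1}) W_{i+1} + W_i. (Thus the duality map β transforms the difference equation with coefficients (a_i, b_i) into the one with coefficients β*(a_i) = −λ_i b_{i−1}/λ_{i+2}, β*(b_i) = −λ_{i+3} a_{i+1}/λ_{i+1}.) -/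

import Mathlib

/-!
Work in the frame `P = V_{i+1} × V_{i+2}`, `Q = V_{i+2} × V_i`, `R = V_i × V_{i+1}`, whose
determinant is `det(V_i, V_{i+1}, V_{i+2})² = 1`. Eliminating `V_{i-1}`, `V_{i+3}` and `V_{i+4}`
with the recurrence gives
`W_i = -λ_i (P + b_{i-1} R)`, `W_{i+1} = -λ_{i+1} Q`, `W_{i+2} = λ_{i+2} (a_i P - R)` and
`W_{i+3} = λ_{i+3} (a_{i+1} Q - (1 + b_i a_{i+1}) P)`.
The determinant of `W_i, W_{i+1}, W_{i+2}` is then `-λ_i λ_{i+1} λ_{i+2} (1 + b_{i-1} a_i) = 1`,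
and the recurrence for `W` reduces to its `P`-component
`λ_{i+3} (1 + b_i a_{i+1}) = λ_i (1 + b_{i-1} a_i)`, the quotient of the normalisations of `λ`
at `i + 1` and at `i`.
-/

/-- `det3 u v w` is the determinant of the 3×3 matrix with columns `u, v, w`
(equivalently, the determinant of the matrix with rows `u, v, w`). -/
noncomputable def det3 (u v w : Fin 3 → ℝ) : ℝ :=
  Matrix.det (Matrix.of ![u, v, w])

open Matrix

section CrossRecurrence

variable {R : Type*} [CommRing R] {a b a' b' : R} {v₀ v₁ v₂ v₃ v₄ : Fin 3 → R}

theorem cross_02_of_recurrence (h : v₃ = a • v₂ + b • v₁ + v₀) :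
    v₀ ⨯₃ v₂ = -(v₂ ⨯₃ v₃ + b • (v₁ ⨯₃ v₂)) := by
  rw [show v₀ = v₃ - a • v₂ - b • v₁ by rw [h]; abel]
  simp only [map_sub, map_smul, LinearMap.sub_apply, LinearMap.smul_apply, cross_self,
    smul_zero, sub_zero, ← cross_anticomm v₂ v₃]
  abel

theorem cross_13_of_recurrence (h : v₃ = a • v₂ + b • v₁ + v₀) :
    v₁ ⨯₃ v₃ = a • (v₁ ⨯₃ v₂) - v₀ ⨯₃ v₁ := by
  rw [h]
  simp only [map_add, map_smul, cross_self, smul_zero, add_zero, ← cross_anticomm v₀ v₁]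
  abel

theorem cross_24_of_recurrence (h : v₃ = a • v₂ + b • v₁ + v₀)
    (h' : v₄ = a' • v₃ + b' • v₂ + v₁) :
    v₂ ⨯₃ v₄ = -(1 + b * a') • (v₁ ⨯₃ v₂) + a' • (v₂ ⨯₃ v₀) := by
  rw [h', h]
  simp only [map_add, map_smul, cross_self, smul_zero, add_zero, ← cross_anticomm v₁ v₂]
  module

end CrossRecurrence

theorem det3_apply (u v w : Fin 3 → ℝ) :
    det3 u v w = u 0 * v 1 * w 2 - u 0 * v 2 * w 1 - u 1 * v 0 * w 2
      + u 1 * v 2 * w 0 + u 2 * v 0 * w 1 - u 2 * v 1 * w 0 :=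
  det_fin_three _

theorem det3_smul (x y z : ℝ) (u v w : Fin 3 → ℝ) :
    det3 (x • u) (y • v) (z • w) = x * y * z * det3 u v w := by
  simp only [det3_apply, Pi.smul_apply, smul_eq_mul]
  ring

theorem det3_add_smul_sub (a b : ℝ) (u v w : Fin 3 → ℝ) :
    det3 (u + b • w) v (a • u - w) = -(1 + b * a) * det3 u v w := by
  simp only [det3_apply, Pi.add_apply, Pi.sub_apply, Pi.smul_apply, smul_eq_mul]
  ring

theorem det3_cross_cross_cross (u v w : Fin 3 → ℝ) :
    det3 (v ⨯₃ w) (w ⨯₃ u) (u ⨯₃ v) = det3 u v w ^ 2 := by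
  simp only [det3_apply, cross_apply, cons_val_zero, cons_val_one, cons_val]
  ring

def dualPolygon {R : Type*} [CommRing R] (lam : ℤ → R) (V : ℤ → Fin 3 → R) (i : ℤ) :
    Fin 3 → R :=
  lam i • V (i - 1) ⨯₃ V (i + 1)

section DualPolygon

variable {R : Type*} [CommRing R] {a b lam : ℤ → R} {V : ℤ → Fin 3 → R}

theorem dualPolygon_eq_frame (hrec : ∀ i, V (i + 3) = a i • V (i + 2) + b i • V (i + 1) + V i)
    (i : ℤ) :
    dualPolygon lam V i =
      -lam i • (V (i + 1) ⨯₃ V (i + 2) + b (i - 1) • V i ⨯₃ V (i + 1)) := by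
  have h := hrec (i - 1)
  rw [show i - 1 + 3 = i + 2 by ring, show i - 1 + 2 = i + 1 by ring, sub_add_cancel] at h
  rw [dualPolygon, cross_02_of_recurrence h, neg_smul, smul_neg]

theorem dualPolygon_add_one_eq_frame (i : ℤ) :
    dualPolygon lam V (i + 1) = -lam (i + 1) • V (i + 2) ⨯₃ V i := by
  rw [dualPolygon, add_sub_cancel_right, add_assoc, one_add_one_eq_two, neg_smul, ← smul_neg,
    cross_anticomm]

theorem dualPolygon_add_two_eq_frame
    (hrec : ∀ i, V (i + 3) = a i • V (i + 2) + b i • V (i + 1) + V i) (i : ℤ) :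
    dualPolygon lam V (i + 2) =
      lam (i + 2) • (a i • V (i + 1) ⨯₃ V (i + 2) - V i ⨯₃ V (i + 1)) := by
  rw [dualPolygon, show i + 2 - 1 = i + 1 by ring, show i + 2 + 1 = i + 3 by ring,
    cross_13_of_recurrence (hrec i)]

theorem dualPolygon_add_three_eq_frame
    (hrec : ∀ i, V (i + 3) = a i • V (i + 2) + b i • V (i + 1) + V i) (i : ℤ) :
    dualPolygon lam V (i + 3) =
      lam (i + 3) • (-(1 + b i * a (i + 1)) • V (i + 1) ⨯₃ V (i + 2)
        + a (i + 1) • V (i + 2) ⨯₃ V i) := by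
  have h := hrec (i + 1)
  rw [show i + 1 + 3 = i + 4 by ring, show i + 1 + 2 = i + 3 by ring,
    show i + 1 + 1 = i + 2 by ring] at h
  rw [dualPolygon, show i + 3 - 1 = i + 2 by ring, show i + 3 + 1 = i + 4 by ring,
    cross_24_of_recurrence (hrec i) h]

end DualPolygon

section DualRecurrence

variable {K : Type*} [Field K] {a b lam : ℤ → K}

theorem mul_mul_mul_one_add_eq_neg_one (hba : ∀ i, 1 + b (i - 1) * a i ≠ 0)
    (hlam : ∀ i, lam i * lam (i + 1) * lam (i + 2) = -1 / (1 + b (i - 1) * a i)) (i : ℤ) :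
    lam i * lam (i + 1) * lam (i + 2) * (1 + b (i - 1) * a i) = -1 := by
  rw [hlam, div_mul_cancel₀ _ (hba i)]

theorem ne_zero_of_mul_mul_eq_neg_one_div (hba : ∀ i, 1 + b (i - 1) * a i ≠ 0)
    (hlam : ∀ i, lam i * lam (i + 1) * lam (i + 2) = -1 / (1 + b (i - 1) * a i)) (i : ℤ) :
    lam i ≠ 0 := by
  intro h
  simpa [h] using mul_mul_mul_one_add_eq_neg_one hba hlam i

theorem mul_one_add_eq_of_mul_mul_eq_neg_one_div (hba : ∀ i, 1 + b (i - 1) * a i ≠ 0)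
    (hlam : ∀ i, lam i * lam (i + 1) * lam (i + 2) = -1 / (1 + b (i - 1) * a i)) (i : ℤ) :
    lam (i + 3) * (1 + b i * a (i + 1)) = lam i * (1 + b (i - 1) * a i) := by
  have h₀ := mul_mul_mul_one_add_eq_neg_one hba hlam i
  have h₁ := mul_mul_mul_one_add_eq_neg_one hba hlam (i + 1)
  rw [show i + 1 - 1 = i by ring, show i + 1 + 1 = i + 2 by ring,
    show i + 1 + 2 = i + 3 by ring] at h₁
  have hne := mul_ne_zero (ne_zero_of_mul_mul_eq_neg_one_div hba hlam (i + 1))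
    (ne_zero_of_mul_mul_eq_neg_one_div hba hlam (i + 2))
  apply mul_left_cancel₀ hne
  linear_combination h₁ - h₀

theorem dualPolygon_recurrence {V : ℤ → Fin 3 → K} (hba : ∀ i, 1 + b (i - 1) * a i ≠ 0)
    (hrec : ∀ i, V (i + 3) = a i • V (i + 2) + b i • V (i + 1) + V i)
    (hlam : ∀ i, lam i * lam (i + 1) * lam (i + 2) = -1 / (1 + b (i - 1) * a i)) (i : ℤ) :
    dualPolygon lam V (i + 3) =
      -(lam i * b (i - 1) / lam (i + 2)) • dualPolygon lam V (i + 2) +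
        -(lam (i + 3) * a (i + 1) / lam (i + 1)) • dualPolygon lam V (i + 1) +
        dualPolygon lam V i := by
  have h₂ : lam i * b (i - 1) / lam (i + 2) * lam (i + 2) = lam i * b (i - 1) :=
    div_mul_cancel₀ _ (ne_zero_of_mul_mul_eq_neg_one_div hba hlam _)
  have h₁ : lam (i + 3) * a (i + 1) / lam (i + 1) * lam (i + 1) = lam (i + 3) * a (i + 1) :=
    div_mul_cancel₀ _ (ne_zero_of_mul_mul_eq_neg_one_div hba hlam _)
  rw [dualPolygon_add_three_eq_frame hrec, dualPolygon_add_two_eq_frame hrec,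
    dualPolygon_add_one_eq_frame, dualPolygon_eq_frame hrec]
  linear_combination (norm := module)
    -(mul_one_add_eq_of_mul_mul_eq_neg_one_div hba hlam i) • V (i + 1) ⨯₃ V (i + 2)
      + h₂ • (a i • V (i + 1) ⨯₃ V (i + 2) - V i ⨯₃ V (i + 1))
      - h₁ • V (i + 2) ⨯₃ V i

end DualRecurrence

theorem det3_dualPolygon {a b lam : ℤ → ℝ} {V : ℤ → Fin 3 → ℝ}
    (hba : ∀ i, 1 + b (i - 1) * a i ≠ 0)
    (hrec : ∀ i, V (i + 3) = a i • V (i + 2) + b i • V (i + 1) + V i)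
    (hdet : ∀ i, det3 (V i) (V (i + 1)) (V (i + 2)) = 1)
    (hlam : ∀ i, lam i * lam (i + 1) * lam (i + 2) = -1 / (1 + b (i - 1) * a i)) (i : ℤ) :
    det3 (dualPolygon lam V i) (dualPolygon lam V (i + 1)) (dualPolygon lam V (i + 2)) = 1 := by
  rw [dualPolygon_eq_frame hrec, dualPolygon_add_one_eq_frame,
    dualPolygon_add_two_eq_frame hrec, det3_smul, det3_add_smul_sub, det3_cross_cross_cross, hdet]
  linear_combination -mul_mul_mul_one_add_eq_neg_one hba hlam i

/-- Lemma 4.7 (the duality `β`): if `V_{i+3} = a_i V_{i+2} + b_i V_{i+1} + V_i`,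
`det(V_i, V_{i+1}, V_{i+2}) = 1`, and `λ_i λ_{i+1} λ_{i+2} = -1/(1 + b_{i-1} a_i)`,
then `W_i := λ_i (V_{i-1} × V_{i+1})` satisfies `det(W_i, W_{i+1}, W_{i+2}) = 1` and
`W_{i+3} = -(λ_i b_{i-1}/λ_{i+2}) W_{i+2} - (λ_{i+3} a_{i+1}/λ_{i+1}) W_{i+1} + W_i`. -/
theorem stmt_13 (a b lam : ℤ → ℝ)
    (hba : ∀ i : ℤ, 1 + b (i - 1) * a i ≠ 0)
    (V : ℤ → Fin 3 → ℝ)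
    (hrec : ∀ i : ℤ, V (i + 3) = a i • V (i + 2) + b i • V (i + 1) + V i)
    (hdet : ∀ i : ℤ, det3 (V i) (V (i + 1)) (V (i + 2)) = 1)
    (hlam : ∀ i : ℤ, lam i * lam (i + 1) * lam (i + 2) = -1 / (1 + b (i - 1) * a i))
    (W : ℤ → Fin 3 → ℝ)
    (hW : ∀ i : ℤ, W i = lam i • crossProduct (V (i - 1)) (V (i + 1))) :
    ∀ i : ℤ,
      det3 (W i) (W (i + 1)) (W (i + 2)) = 1 ∧
      W (i + 3) = -(lam i * b (i - 1) / lam (i + 2)) • W (i + 2) +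
        -(lam (i + 3) * a (i + 1) / lam (i + 1)) • W (i + 1) + W i := by
  obtain rfl : W = dualPolygon lam V := funext hW
  exact fun i => ⟨det3_dualPolygon hba hrec hdet hlam i, dualPolygon_recurrence hba hrec hlam i⟩
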